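/- Let F be the free group on a finite set S, and let T, T' be elements of the tensor algebra T(R^S) (where R^S is the module of functions S → R) whose letter-braiding functions on F agree: I_T(w) = I_{T'}(w) for all w ∈ F. Then T = T'. (Uniqueness of letter-braiding representatives.) -/

import Mathlib

open scoped TensorProduct DirectSum

/-- The value of the functional `h : S → R` on a signed letter: `h s` on `s ∈ S`
and `-(h s)` on `s⁻¹` (as dictated by `h` extending to a homomorphism `F_S → R`),
as a linear map in `h`. -/
noncomputable def letterEval (R : Type*) [CommRing R] {S : Type*} (p : S × Bool) :
    (S → R) →ₗ[R] R :=
  if p.2 then LinearMap.proj p.1 else -(LinearMap.proj p.1)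

/-- The admissibility condition on a tuple of indices `i₁ ≤ … ≤ iₙ` into a word `L`:
consecutive indices satisfy `iⱼ <_w i_{j+1}`, which is strict `<` if the letter at `iⱼ`
is positive and `≤` if it is an inverse letter. -/
def Admissible {S : Type*} (L : List (S × Bool)) {n : ℕ} (ι : Fin n → Fin L.length) : Prop :=
  ∀ j i : Fin n, (i : ℕ) = (j : ℕ) + 1 →
    (if (L.get (ι j)).2 then ι j < ι i else ι j ≤ ι i)

open Classical in
/-- The letter-braiding function of a pure tensor `[h₁|⋯|hₙ]` of functionals on
the free group `F_S`, computed on the reduced word of `w`: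
`I(w) = Σ_{i₁ <_w ⋯ <_w iₙ} h₁(s_{i₁}) ⋯ hₙ(s_{iₙ})`. -/
noncomputable def lbPure {R S : Type*} [CommRing R] [DecidableEq S] {n : ℕ}
    (hs : Fin n → S → R) (w : FreeGroup S) : R :=
  ∑ ι ∈ Finset.univ.filter
      (fun ι : Fin n → Fin w.toWord.length => Admissible w.toWord ι),
    ∏ j : Fin n, letterEval R (w.toWord.get (ι j)) (hs j)

open Classical in
/-- The letter-braiding multilinear map: `(h₁, …, hₙ) ↦ I_{[h₁|⋯|hₙ]}`. -/
noncomputable def lbMulti (R S : Type*) [CommRing R] [DecidableEq S] (n : ℕ) :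
    MultilinearMap R (fun _ : Fin n => (S → R)) (FreeGroup S → R) :=
  MultilinearMap.pi fun w =>
    ∑ ι ∈ Finset.univ.filter
        (fun ι : Fin n → Fin w.toWord.length => Admissible w.toWord ι),
      (MultilinearMap.mkPiAlgebra R (Fin n) R).compLinearMap
        (fun j => letterEval R (w.toWord.get (ι j)))

/-- The letter-braiding linear map on the tensor algebra `T(R^S) = ⊕ₙ (R^S)^{⊗n}`,
sending a tensor `T` to its letter-braiding function `I_T : F_S → R`. -/
noncomputable def LB (R S : Type*) [CommRing R] [DecidableEq S] :
    (⨁ n : ℕ, ⨂[R]^n (S → R)) →ₗ[R] (FreeGroup S → R) :=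
  DirectSum.toModule R ℕ _ fun n => PiTensorProduct.lift (lbMulti R S n)

/-- The `R`-linear extension of a function on `F_S` to the group ring `R[F_S]`. -/
noncomputable def linExt {R S : Type*} [CommRing R] (f : FreeGroup S → R) :
    MonoidAlgebra R (FreeGroup S) →ₗ[R] R :=
  Finsupp.linearCombination R f ∘ₗ (MonoidAlgebra.coeffLinearEquiv R).toLinearMap

/-!
On a positive word `s₁⋯sₙ` the admissible index tuples are exactly the strictly increasing
ones. So the degree-`m` part of a tensor contributes nothing there for `m > n`, and for `m = n`
only the identity tuple survives, which reads off the coefficient of `e_{s₁} ⊗ ⋯ ⊗ e_{sₙ}` in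
the degree-`n` part. If `I_T = 0`, induction on `n` kills every homogeneous component of `T`.
-/

open PiTensorProduct

theorem Basis.piTensorProduct_basisFun_repr_apply {ι R S : Type*} [Fintype ι] [CommRing R]
    [Finite S] (t : ⨂[R] _ : ι, S → R) (s : ι → S) :
    (Basis.piTensorProduct fun _ => Pi.basisFun R S).repr t s =
      lift ((MultilinearMap.mkPiAlgebra R ι R).compLinearMap fun j => LinearMap.proj (s j)) t := by
  induction t using PiTensorProduct.induction_on with
  | smul_tprod r x => simp [Basis.piTensorProduct_repr_tprod_apply]
  | add x y hx hy => simp [hx, hy]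

namespace LetterBraiding

section PositiveWords

variable {S : Type*} {L : List (S × Bool)}

theorem isReduced_of_forall_snd (hL : ∀ p ∈ L, p.2 = true) : FreeGroup.IsReduced L :=
  (List.pairwise_of_forall_mem_list fun a ha b hb _ => by rw [hL a ha, hL b hb]).isChain

theorem admissible_iff_strictMono (hL : ∀ p ∈ L, p.2 = true) {n : ℕ}
    {ι : Fin n → Fin L.length} : Admissible L ι ↔ StrictMono ι := by
  have hpos : ∀ k, (L.get k).2 = true := fun k => hL _ (List.get_mem L k)
  simp only [Admissible, hpos, if_true]
  cases n with
  | zero => exact ⟨fun _ i => i.elim0, fun _ i => i.elim0⟩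
  | succ n =>
    rw [Fin.strictMono_iff_lt_succ]
    refine ⟨fun h i => h _ _ rfl, fun h j i hij => ?_⟩
    obtain ⟨k, rfl, rfl⟩ : ∃ k : Fin n, j = k.castSucc ∧ i = k.succ :=
      ⟨⟨j, by omega⟩, rfl, Fin.ext hij⟩
    exact h k

theorem not_admissible_of_length_lt (hL : ∀ p ∈ L, p.2 = true) {n : ℕ} (hn : L.length < n)
    (ι : Fin n → Fin L.length) : ¬ Admissible L ι := fun h => by
  simpa using hn.trans_le <| Fin.le_of_injective ι ((admissible_iff_strictMono hL).1 h).injective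

theorem admissible_iff_eq_cast (hL : ∀ p ∈ L, p.2 = true) {n : ℕ} (hn : L.length = n)
    (ι : Fin n → Fin L.length) : Admissible L ι ↔ ι = Fin.cast hn.symm := by
  rw [admissible_iff_strictMono hL]
  refine ⟨fun h => ?_, fun h => h ▸ Fin.cast_strictMono _⟩
  funext j
  simpa [Fin.ext_iff] using ((Fin.cast_strictMono hn).comp h).apply_eq (x := j)

noncomputable def posWord {n : ℕ} (s : Fin n → S) : FreeGroup S :=
  FreeGroup.mk (List.ofFn fun j => (s j, true))

variable [DecidableEq S]

theorem toWord_posWord {n : ℕ} (s : Fin n → S) :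
    (posWord s).toWord = List.ofFn fun j => (s j, true) :=
  (isReduced_of_forall_snd (by simp)).reduce_eq

end PositiveWords

variable {R S : Type*} [CommRing R] [DecidableEq S]

open Classical in
theorem lift_lbMulti_apply {n : ℕ} (t : ⨂[R]^n (S → R)) (w : FreeGroup S) :
    lift (lbMulti R S n) t w =
      ∑ ι ∈ Finset.univ.filter fun ι : Fin n → Fin w.toWord.length => Admissible w.toWord ι,
        lift ((MultilinearMap.mkPiAlgebra R (Fin n) R).compLinearMap
          fun j => letterEval R (w.toWord.get (ι j))) t := by
  induction t using PiTensorProduct.induction_on with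
  | smul_tprod r h => simp [lbMulti, Finset.mul_sum]
  | add x y hx hy => simp [hx, hy, Finset.sum_add_distrib]

theorem lift_lbMulti_apply_of_length_lt {w : FreeGroup S} (hw : ∀ p ∈ w.toWord, p.2 = true)
    {n : ℕ} (hn : w.toWord.length < n) (t : ⨂[R]^n (S → R)) : lift (lbMulti R S n) t w = 0 := by
  classical
  rw [lift_lbMulti_apply]
  exact Finset.sum_eq_zero fun ι hι =>
    absurd (Finset.mem_filter.1 hι).2 (not_admissible_of_length_lt hw hn ι)

theorem lift_lbMulti_apply_of_length_eq {w : FreeGroup S} (hw : ∀ p ∈ w.toWord, p.2 = true)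
    {n : ℕ} (hn : w.toWord.length = n) (t : ⨂[R]^n (S → R)) :
    lift (lbMulti R S n) t w =
      lift ((MultilinearMap.mkPiAlgebra R (Fin n) R).compLinearMap
        fun j => LinearMap.proj (w.toWord.get (Fin.cast hn.symm j)).1) t := by
  classical
  have hsingle : Finset.univ.filter (fun ι : Fin n → Fin w.toWord.length => Admissible w.toWord ι)
      = {Fin.cast hn.symm} := by
    ext ι
    simp [admissible_iff_eq_cast hw hn]
  rw [lift_lbMulti_apply, hsingle, Finset.sum_singleton]
  congr 3
  funext j
  rw [letterEval, if_pos (hw _ (List.get_mem _ _))]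

theorem lift_lbMulti_posWord [Fintype S] {n : ℕ} (s : Fin n → S) (t : ⨂[R]^n (S → R)) :
    lift (lbMulti R S n) t (posWord s) =
      (Basis.piTensorProduct fun _ => Pi.basisFun R S).repr t s := by
  rw [lift_lbMulti_apply_of_length_eq (by simp [toWord_posWord]) (by simp [toWord_posWord]),
    Basis.piTensorProduct_basisFun_repr_apply]
  congr 4
  funext j
  simp [toWord_posWord]

open Classical in
theorem LB_apply (U : ⨁ n : ℕ, ⨂[R]^n (S → R)) (w : FreeGroup S) :
    LB R S U w = ∑ m ∈ U.support, lift (lbMulti R S m) (U m) w := by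
  rw [LB, DirectSum.toModule, DFinsupp.lsum_apply_apply, DFinsupp.sumAddHom_apply,
    DFinsupp.sum, Finset.sum_apply]
  rfl

theorem LB_posWord_of_forall_lt [Fintype S] {U : ⨁ n : ℕ, ⨂[R]^n (S → R)} {n : ℕ}
    (hU : ∀ m < n, U m = 0) (s : Fin n → S) :
    LB R S U (posWord s) = (Basis.piTensorProduct fun _ => Pi.basisFun R S).repr (U n) s := by
  classical
  have hpos : ∀ p ∈ (posWord s).toWord, p.2 = true := by simp [toWord_posWord]
  have hlen : (posWord s).toWord.length = n := by simp [toWord_posWord]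
  rw [LB_apply, Finset.sum_eq_single n, lift_lbMulti_posWord]
  · intro m _ hmn
    rcases hmn.lt_or_gt with hlt | hgt
    · simp [hU m hlt]
    · exact lift_lbMulti_apply_of_length_lt hpos (by rwa [hlen]) _
  · intro hn
    simp [DFinsupp.notMem_support_iff.1 hn]

theorem eq_zero_of_LB_eq_zero [Fintype S] {U : ⨁ n : ℕ, ⨂[R]^n (S → R)} (hU : LB R S U = 0) :
    U = 0 := by
  ext n
  induction n using Nat.strong_induction_on with
  | _ n ih =>
    refine (Basis.piTensorProduct fun _ => Pi.basisFun R S).repr.map_eq_zero_iff.1 ?_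
    ext s
    rw [← LB_posWord_of_forall_lt ih, hU]
    rfl

end LetterBraiding

/-- Uniqueness of letter-braiding representatives: for a finite set `S`, two tensors in
`T(R^S)` with the same letter-braiding function on the free group `F_S` are equal;
i.e. `T ↦ I_T` is injective. -/
theorem letterBraiding_injective (R S : Type*) [CommRing R] [Fintype S] [DecidableEq S]
    (T T' : ⨁ n : ℕ, ⨂[R]^n (S → R))
    (h : ∀ w : FreeGroup S, LB R S T w = LB R S T' w) :
    T = T' :=
  LinearMap.ker_eq_bot.1 (LinearMap.ker_eq_bot'.2 fun _ => LetterBraiding.eq_zero_of_LB_eq_zero)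
    (funext h)
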